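/- Let f be the standard normal density, Q its tail function, and Φ its cdf. Then for all real x, 2Q(x) + x·f(x) - √(x²+4)·f(x) > 0. -/

import Mathlib

/-!
Put `g x = 2 Q(x) + (x - √(x² + 4)) f(x)`. Using `Q' = -f` and `f' = -x f`, one finds
`g' x = f(x) (x (x² + 3) - (1 + x²) √(x² + 4)) / √(x² + 4)`, which is negative because squaring
`x (x² + 3) < (1 + x²) √(x² + 4)` leaves the margin `4`. So `g` is strictly decreasing, and since
both `Q` and `f` vanish at `+∞` while `x - √(x² + 4)` stays bounded there, `g > 0` everywhere.
-/

open Real MeasureTheory Set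

noncomputable def stdNormalPdf (x : ℝ) : ℝ := (Real.sqrt (2 * Real.pi))⁻¹ * Real.exp (-x ^ 2 / 2)

noncomputable def gaussQ (x : ℝ) : ℝ := ∫ t in Set.Ici x, stdNormalPdf t

noncomputable def gaussPhi (x : ℝ) : ℝ := ∫ t in Set.Iic x, stdNormalPdf t

open Filter Topology ProbabilityTheory

theorem hasDerivAt_integral_Ici {E : Type*} [NormedAddCommGroup E] [NormedSpace ℝ E]
    [CompleteSpace E] {f : ℝ → E} {x : ℝ} (hf : Integrable f) (hx : ContinuousAt f x) :
    HasDerivAt (fun y => ∫ t in Ici y, f t) (-f x) x := by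
  have htail : ∀ y, ∫ t in Ici y, f t = (∫ t in Ioi 0, f t) - ∫ t in (0 : ℝ)..y, f t := fun y => by
    rw [integral_Ici_eq_integral_Ioi, eq_sub_iff_add_eq',
      intervalIntegral.integral_interval_add_Ioi hf.integrableOn hf.integrableOn]
  simp only [htail]
  exact (intervalIntegral.integral_hasDerivAt_right hf.intervalIntegrable
    (hf.aestronglyMeasurable.stronglyMeasurableAtFilter) hx).const_sub _

theorem stdNormalPdf_eq_gaussianPDFReal : stdNormalPdf = gaussianPDFReal 0 1 := by
  ext x
  simp [stdNormalPdf, gaussianPDFReal]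

theorem stdNormalPdf_pos (x : ℝ) : 0 < stdNormalPdf x := by
  unfold stdNormalPdf
  positivity

theorem integrable_stdNormalPdf : Integrable stdNormalPdf :=
  stdNormalPdf_eq_gaussianPDFReal ▸ integrable_gaussianPDFReal 0 1

theorem continuous_stdNormalPdf : Continuous stdNormalPdf := by
  unfold stdNormalPdf
  fun_prop

theorem hasDerivAt_stdNormalPdf (x : ℝ) : HasDerivAt stdNormalPdf (-x * stdNormalPdf x) x := by
  have h : HasDerivAt (fun t : ℝ => -t ^ 2 / 2) (-x) x := by
    refine (((hasDerivAt_pow 2 x).neg).div_const 2).congr_deriv ?_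
    push_cast
    ring
  exact (h.exp.const_mul (√(2 * π))⁻¹).congr_deriv (by unfold stdNormalPdf; ring)

theorem tendsto_stdNormalPdf_atTop : Tendsto stdNormalPdf atTop (𝓝 0) := by
  have h : Tendsto (fun x : ℝ => -x ^ 2 / 2) atTop atBot := by
    simp only [neg_div]
    exact tendsto_neg_atTop_atBot.comp
      ((tendsto_pow_atTop two_ne_zero).atTop_div_const two_pos)
  have := (tendsto_exp_atBot.comp h).const_mul (√(2 * π))⁻¹
  rwa [mul_zero] at this

theorem hasDerivAt_gaussQ (x : ℝ) : HasDerivAt gaussQ (-stdNormalPdf x) x :=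
  hasDerivAt_integral_Ici integrable_stdNormalPdf continuous_stdNormalPdf.continuousAt

theorem tendsto_gaussQ_atTop : Tendsto gaussQ atTop (𝓝 0) :=
  tendsto_integral_Ici_zero tendsto_id

theorem mul_sq_add_three_lt_sqrt (x : ℝ) : x * (x ^ 2 + 3) < (1 + x ^ 2) * √(x ^ 2 + 4) := by
  have hs : √(x ^ 2 + 4) ^ 2 = x ^ 2 + 4 := sq_sqrt (by positivity)
  have hpos : 0 < (1 + x ^ 2) * √(x ^ 2 + 4) := by positivity
  refine abs_lt_of_sq_lt_sq' ?_ hpos.le |>.2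
  nlinarith

theorem hasDerivAt_sqrt_sq_add_four (x : ℝ) :
    HasDerivAt (fun t => √(t ^ 2 + 4)) (x / √(x ^ 2 + 4)) x := by
  convert ((hasDerivAt_pow 2 x).add_const 4).sqrt (by positivity) using 1
  push_cast
  ring

noncomputable def millsGap (x : ℝ) : ℝ := 2 * gaussQ x + (x - √(x ^ 2 + 4)) * stdNormalPdf x

theorem hasDerivAt_millsGap (x : ℝ) :
    HasDerivAt millsGap
      (stdNormalPdf x * (x * (x ^ 2 + 3) - (1 + x ^ 2) * √(x ^ 2 + 4)) / √(x ^ 2 + 4)) x := by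
  have hs : √(x ^ 2 + 4) ^ 2 = x ^ 2 + 4 := sq_sqrt (by positivity)
  refine (((hasDerivAt_gaussQ x).const_mul 2).add
    (((hasDerivAt_id x).sub (hasDerivAt_sqrt_sq_add_four x)).mul
      (hasDerivAt_stdNormalPdf x))).congr_deriv ?_
  simp only [Pi.sub_apply, id]
  field_simp
  linear_combination stdNormalPdf x * x * hs

theorem strictAnti_millsGap : StrictAnti millsGap := by
  refine strictAnti_of_deriv_neg fun x => ?_
  rw [(hasDerivAt_millsGap x).deriv]
  exact div_neg_of_neg_of_pos
    (mul_neg_of_pos_of_neg (stdNormalPdf_pos x) (sub_neg.2 (mul_sq_add_three_lt_sqrt x)))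
    (by positivity)

theorem tendsto_millsGap_atTop : Tendsto millsGap atTop (𝓝 0) := by
  have hbdd : ∀ᶠ x in atTop, ‖(x - √(x ^ 2 + 4)) * stdNormalPdf x‖ ≤ 2 * stdNormalPdf x := by
    filter_upwards [eventually_ge_atTop 0] with x hx
    have hlo : x ≤ √(x ^ 2 + 4) := le_sqrt_of_sq_le (by linarith)
    have hhi : √(x ^ 2 + 4) ≤ x + 2 := sqrt_le_iff.2 ⟨by linarith, by nlinarith⟩
    rw [norm_mul, Real.norm_of_nonneg (stdNormalPdf_pos x).le]
    refine mul_le_mul_of_nonneg_right ?_ (stdNormalPdf_pos x).le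
    rw [Real.norm_eq_abs, abs_le]
    constructor <;> linarith
  have hprod := squeeze_zero_norm' hbdd (by simpa using tendsto_stdNormalPdf_atTop.const_mul 2)
  have := (tendsto_gaussQ_atTop.const_mul 2).add hprod
  rwa [mul_zero, zero_add] at this

theorem millsGap_pos (x : ℝ) : 0 < millsGap x :=
  (strictAnti_millsGap.antitone.le_of_tendsto tendsto_millsGap_atTop (x + 1)).trans_lt
    (strictAnti_millsGap (lt_add_one x))

theorem stmt5 (x : ℝ) :
    2 * gaussQ x + x * stdNormalPdf x - Real.sqrt (x ^ 2 + 4) * stdNormalPdf x > 0 := by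
  have h := millsGap_pos x
  unfold millsGap at h
  linarith
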